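/- The Peskin 4-point IB kernel satisfies the even–odd condition: for every r ∈ ℝ, the sum of φ_IB4(r − j) over all even integers j equals 1/2, and the sum over all odd integers j equals 1/2 (each sum has only finitely many nonzero terms since φ_IB4 vanishes outside [−2,2]). -/
import Mathlib


/-- The Peskin 4-point immersed boundary kernel. -/
noncomputable def phiIB4 (r : ℝ) : ℝ :=
  if r ≤ -2 then 0
  else if r ≤ -1 then (5 + 2 * r - Real.sqrt (-7 - 12 * r - 4 * r ^ 2)) / 8
  else if r ≤ 0 then (3 + 2 * r + Real.sqrt (1 - 4 * r - 4 * r ^ 2)) / 8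
  else if r ≤ 1 then (3 - 2 * r + Real.sqrt (1 + 4 * r - 4 * r ^ 2)) / 8
  else if r ≤ 2 then (5 - 2 * r - Real.sqrt (-7 + 12 * r - 4 * r ^ 2)) / 8
  else 0

lemma phiIB4_zero_left {r : ℝ} (h : r ≤ -2) : phiIB4 r = 0 := by
  simp [phiIB4, h]

lemma phiIB4_zero_right {r : ℝ} (h : 2 ≤ r) : phiIB4 r = 0 := by
  unfold phiIB4
  split_ifs with h1 h2 h3 h4 h5
  · rfl
  · linarith
  · linarith
  · linarith
  · have : r = 2 := le_antisymm h5 h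
    subst this
    norm_num
  · rfl

lemma phiIB4_pair {s : ℝ} (h0 : 0 ≤ s) (h2 : s < 2) :
    phiIB4 s + phiIB4 (s - 2) = 1/2 := by
  unfold phiIB4
  split_ifs <;> try linarith
  all_goals first
  | (have hs : s = 0 := le_antisymm (by assumption) h0
     subst hs; norm_num)
  | (rw [show (-7 - 12*(s-2) - 4*(s-2)^2 : ℝ) = 1 + 4*s - 4*s^2 by ring]; ring)
  | (rw [show (1 - 4*(s-2) - 4*(s-2)^2 : ℝ) = -7 + 12*s - 4*s^2 by ring]; ring)

lemma phiIB4_sum_even (x : ℝ) : ∑' j : ℤ, phiIB4 (x - 2 * (j : ℝ)) = 1/2 := by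
  set j0 : ℤ := ⌊x/2⌋ with hj0
  have hle : (j0 : ℝ) ≤ x/2 := Int.floor_le _
  have hlt : x/2 < (j0 : ℝ) + 1 := Int.lt_floor_add_one _
  have key : ∑' j : ℤ, phiIB4 (x - 2*(j:ℝ)) =
      ∑ j ∈ ({j0, j0+1} : Finset ℤ), phiIB4 (x - 2*(j:ℝ)) := by
    apply tsum_eq_sum
    intro j hj
    simp only [Finset.mem_insert, Finset.mem_singleton, not_or] at hj
    rcases lt_or_ge j j0 with h | h
    · apply phiIB4_zero_right
      have h' : (j : ℝ) ≤ (j0 : ℝ) - 1 := by exact_mod_cast Int.le_sub_one_of_lt h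
      linarith
    · have h' : j0 + 2 ≤ j := by omega
      apply phiIB4_zero_left
      have h'' : (j0 : ℝ) + 2 ≤ (j : ℝ) := by exact_mod_cast h'
      linarith
  rw [key, Finset.sum_pair (by omega : j0 ≠ j0 + 1)]
  have hs0 : 0 ≤ x - 2*(j0:ℝ) := by linarith
  have hs2 : x - 2*(j0:ℝ) < 2 := by linarith
  have hpair := phiIB4_pair hs0 hs2
  have hcast : ((j0 + 1 : ℤ) : ℝ) = (j0 : ℝ) + 1 := by push_cast; ring
  rw [hcast, show x - 2*((j0:ℝ)+1) = (x - 2*(j0:ℝ)) - 2 by ring]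
  exact hpair

/-- The Peskin 4-point IB kernel satisfies the even–odd condition: the sum of
`φ_IB4(r - j)` over even integers `j` equals `1/2`, and over odd integers `j`
equals `1/2`. -/
theorem phiIB4_even_odd :
    ∀ r : ℝ,
      (∑' j : ℤ, phiIB4 (r - (2 * j : ℤ)) = 1/2) ∧
      (∑' j : ℤ, phiIB4 (r - (2 * j + 1 : ℤ)) = 1/2) := by
  intro r
  constructor
  · calc ∑' j : ℤ, phiIB4 (r - (2 * j : ℤ))
        = ∑' j : ℤ, phiIB4 (r - 2 * (j : ℝ)) := by
          apply tsum_congr; intro j; push_cast; ring_nf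
    _ = 1/2 := phiIB4_sum_even r
  · calc ∑' j : ℤ, phiIB4 (r - (2 * j + 1 : ℤ))
        = ∑' j : ℤ, phiIB4 ((r - 1) - 2 * (j : ℝ)) := by
          apply tsum_congr; intro j; push_cast; ring_nf
    _ = 1/2 := phiIB4_sum_even (r - 1)
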